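/- Let λ ∈ ℂ with λ ≠ 0 and λ ≠ 1, and let F(x,y,z) = y·z² − x·(x−y)·(x−λy). For all s,t ∈ ℂ satisfying s² = t·(t−1)·(t−λ), the skew-symmetric 6×6 linear matrix A(x,y,z) = x·J_x + z·J_z + y·B(t,s,0) satisfies det A(x,y,z) = F(x,y,z)² for all (x,y,z) ∈ ℂ³. -/

import Mathlib

open Matrix

/-- The skew-symmetric 6×6 matrix `J_x` with above-diagonal entries
`(1,6) = (2,5) = (3,4) = 1` and all other above-diagonal entries `0`. -/
noncomputable def Jx : Matrix (Fin 6) (Fin 6) ℂ :=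
  !![0, 0, 0, 0, 0, 1;
     0, 0, 0, 0, 1, 0;
     0, 0, 0, 1, 0, 0;
     0, 0, -1, 0, 0, 0;
     0, -1, 0, 0, 0, 0;
     -1, 0, 0, 0, 0, 0]

/-- The skew-symmetric 6×6 matrix `J_z` with above-diagonal entries
`(1,5) = (2,4) = 1` and all other above-diagonal entries `0`. -/
noncomputable def Jz : Matrix (Fin 6) (Fin 6) ℂ :=
  !![0, 0, 0, 0, 1, 0;
     0, 0, 0, 1, 0, 0;
     0, 0, 0, 0, 0, 0;
     0, -1, 0, 0, 0, 0;
     -1, 0, 0, 0, 0, 0;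
     0, 0, 0, 0, 0, 0]

/-- The skew-symmetric 6×6 matrix `B(t,s,c)` (depending also on the parameter `l = λ`)
with above-diagonal entries `(1,2) = c`, `(1,4) = (3t² − 2t(1+λ) − (1−λ)²)/4`, `(1,5) = s`,
`(1,6) = (t−1−λ)/2`, `(2,4) = −s`, `(2,5) = −t`, `(3,4) = (t−1−λ)/2`, `(3,6) = −1`,
and all other above-diagonal entries `0`. -/
noncomputable def Bmat (l t s c : ℂ) : Matrix (Fin 6) (Fin 6) ℂ :=
  !![0, c, 0, (3*t^2 - 2*t*(1+l) - (1-l)^2)/4, s, (t-1-l)/2;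
     -c, 0, 0, -s, -t, 0;
     0, 0, 0, (t-1-l)/2, 0, -1;
     -((3*t^2 - 2*t*(1+l) - (1-l)^2)/4), s, -((t-1-l)/2), 0, 0, 0;
     -s, t, 0, 0, 0, 0;
     -((t-1-l)/2), 0, 1, 0, 0, 0]

theorem blockdet (M : Matrix (Fin 3) (Fin 3) ℂ) :
    (Matrix.fromBlocks 0 M (-(Mᵀ)) 0).det = M.det ^ 2 := by
  have h : Matrix.fromBlocks (0 : Matrix (Fin 3) (Fin 3) ℂ) M (-(Mᵀ)) 0 =
      (Matrix.fromBlocks (-(Mᵀ)) 0 0 M).submatrix (Equiv.sumComm (Fin 3) (Fin 3)) id := by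
    ext i j
    cases i <;> cases j <;> rfl
  have hs : Equiv.Perm.sign (Equiv.sumComm (Fin 3) (Fin 3)) = -1 := by decide
  rw [h, Matrix.det_permute, Matrix.det_fromBlocks_zero₂₁, Matrix.det_neg,
    Matrix.det_transpose, hs]
  norm_num [Fintype.card_fin]
  ring

set_option maxHeartbeats 1600000 in
theorem stmt_5 (l : ℂ) (hl0 : l ≠ 0) (hl1 : l ≠ 1)
    (s t : ℂ) (hst : s^2 = t * (t - 1) * (t - l)) (x y z : ℂ) :
    (x • Jx + z • Jz + y • Bmat l t s 0).det =
      (y * z^2 - x * (x - y) * (x - l * y))^2 := by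
  set M : Matrix (Fin 3) (Fin 3) ℂ :=
    !![y*((3*t^2 - 2*t*(1+l) - (1-l)^2)/4), z + y*s, x + y*((t-1-l)/2);
       z - y*s, x - y*t, 0;
       x + y*((t-1-l)/2), 0, -y] with hM
  have h : (x • Jx + z • Jz + y • Bmat l t s 0) =
      (Matrix.fromBlocks 0 M (-(Mᵀ)) 0).submatrix
        finSumFinEquiv.symm finSumFinEquiv.symm := by
    have h2 : (Matrix.fromBlocks 0 M (-(Mᵀ)) 0).submatrix
        finSumFinEquiv.symm finSumFinEquiv.symm =
      !![0, 0, 0, y*((3*t^2 - 2*t*(1+l) - (1-l)^2)/4), z + y*s, x + y*((t-1-l)/2);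
         0, 0, 0, z - y*s, x - y*t, 0;
         0, 0, 0, x + y*((t-1-l)/2), 0, -y;
         -(y*((3*t^2 - 2*t*(1+l) - (1-l)^2)/4)), -(z - y*s), -(x + y*((t-1-l)/2)), 0, 0, 0;
         -(z + y*s), -(x - y*t), -(0:ℂ), 0, 0, 0;
         -(x + y*((t-1-l)/2)), -(0:ℂ), -(-y), 0, 0, 0] := by
      ext i j
      fin_cases i <;> fin_cases j <;> rfl
    rw [h2]
    simp only [Jx, Jz, Bmat, Matrix.smul_of, Matrix.of_add_of,
      Matrix.smul_cons, Matrix.smul_empty, Matrix.add_cons, Matrix.head_cons,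
      Matrix.tail_cons, Matrix.empty_add_empty]
    refine congrArg Matrix.of ?_
    simp only [Matrix.vecCons, Fin.cons_inj, Matrix.empty_eq, and_true, true_and,
      smul_eq_mul]
    repeat' apply And.intro
    all_goals ring
  rw [h, Matrix.det_submatrix_equiv_self, blockdet, hM, Matrix.det_fin_three]
  simp only [Matrix.cons_val', Matrix.cons_val_zero, Matrix.cons_val_one, Matrix.head_cons,
    Matrix.cons_val_two, Matrix.tail_cons, Matrix.empty_val', Matrix.cons_val_fin_one,
    Matrix.head_fin_const, Matrix.of_apply]
  linear_combination (-2*y^4*z^2 + y^6*s^2 + y^6*t^2 - y^6*t^3 - y^6*l*t + y^6*l*t^2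
    + 2*l*x*y^5 - 2*x^2*y^4 - 2*l*x^2*y^4 + 2*x^3*y^3) * hst
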